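/- Let ρ be a d×d complex positive semidefinite matrix with trace 1, let P be a d×d Hermitian projection (P = Pᴴ and P² = P), let v ∈ ℂ^d be a unit vector, and let ε ∈ [0,1]. If tr(Pρ) ≥ 1 - ε, then ‖P ρ P + (1 - tr(Pρ)) v vᴴ - ρ‖₁ ≤ 2√ε + ε, where ‖A‖₁ = tr√(AᴴA) denotes the trace norm. In particular, if ε = 2^{-L} then the bound is at most 2^{2 - L/2}. -/

import Mathlib

/-!
Put `Q = 1 - P`, `t = tr(Pρ)` and `σ = v vᴴ`. Then `𝒯(ρ) - ρ = (1 - t) σ - Qρ - PρQ` is Hermitian,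
so its trace norm is `tr(C (𝒯(ρ) - ρ))` for the unitary `C = sign(𝒯(ρ) - ρ)`. Each of the three
terms is an inner product `tr(A ρ Bᴴ)` for the positive semidefinite form given by `ρ` (or `σ`),
and Cauchy–Schwarz gives `|tr(Cσ)| ≤ 1`, `|tr(CQρ)| ≤ √(1 - t)` and `|tr(CPρQ)| ≤ √(t (1 - t))`.
Hence `‖𝒯(ρ) - ρ‖₁ ≤ (1 - t) + 2√(1 - t) ≤ ε + 2√ε`.
-/

open scoped ComplexOrder

/-- The trace norm of a square complex matrix: `‖A‖₁ = tr √(Aᴴ A)`. -/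
noncomputable def traceNorm {d : ℕ} (A : Matrix (Fin d) (Fin d) ℂ) : ℝ :=
  (let hA := (Matrix.posSemidef_conjTranspose_mul_self A).1;
    (hA.eigenvectorUnitary.1 * Matrix.diagonal ((fun x : ℝ => (x : ℂ)) ∘ (√·) ∘ hA.eigenvalues) *
      (star hA.eigenvectorUnitary : Matrix (Fin d) (Fin d) ℂ))).trace.re

open scoped MatrixOrder
open Matrix

namespace Matrix

variable {n : Type*} [Fintype n]

theorem IsHermitian.trace_mul_mul_conjTranspose_of_isIdempotentElem {R : Type*}
    [CommSemiring R] [StarRing R] {P : Matrix n n R} (hP : P.IsHermitian)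
    (hP2 : IsIdempotentElem P) (ρ : Matrix n n R) : (P * ρ * Pᴴ).trace = (P * ρ).trace := by
  rw [hP.eq, trace_mul_cycle, hP2.eq]

variable {𝕜 : Type*} [RCLike 𝕜] {ρ : Matrix n n 𝕜}

theorem PosSemidef.norm_trace_mul_mul_conjTranspose_le (hρ : ρ.PosSemidef)
    (A B : Matrix n n 𝕜) :
    ‖(A * ρ * Bᴴ).trace‖ ≤
      √(RCLike.re (A * ρ * Aᴴ).trace) * √(RCLike.re (B * ρ * Bᴴ).trace) := by
  -- the inner product `⟪X, Y⟫ = tr(Y ρ Xᴴ)` weighted by `ρ`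
  let _ := ρ.toMatrixSeminormedAddCommGroup hρ
  let _ := ρ.toMatrixInnerProductSpace hρ
  have h := norm_inner_le_norm (𝕜 := 𝕜) B A
  rw [norm_eq_sqrt_re_inner (𝕜 := 𝕜) A, norm_eq_sqrt_re_inner (𝕜 := 𝕜) B, mul_comm] at h
  exact h

theorem PosSemidef.norm_trace_unitary_mul_le [DecidableEq n] (hρ : ρ.PosSemidef)
    {C : Matrix n n 𝕜} (hC : C ∈ unitary (Matrix n n 𝕜)) (A B : Matrix n n 𝕜) :
    ‖(C * (A * ρ * Bᴴ)).trace‖ ≤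
      √(RCLike.re (A * ρ * Aᴴ).trace) * √(RCLike.re (B * ρ * Bᴴ).trace) := by
  have hexpand : (Cᴴ * B) * ρ * (Cᴴ * B)ᴴ = Cᴴ * (B * ρ * Bᴴ * C) := by
    simp only [conjTranspose_mul, conjTranspose_conjTranspose, Matrix.mul_assoc]
  have hweight : ((Cᴴ * B) * ρ * (Cᴴ * B)ᴴ).trace = (B * ρ * Bᴴ).trace := by
    rw [hexpand, trace_mul_comm, Matrix.mul_assoc, ← star_eq_conjTranspose C,
      Unitary.mul_star_self_of_mem hC, Matrix.mul_one]
  rw [← hweight, trace_mul_comm, Matrix.mul_assoc, ← conjTranspose_conjTranspose C,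
    ← conjTranspose_mul, conjTranspose_conjTranspose]
  exact hρ.norm_trace_mul_mul_conjTranspose_le A (Cᴴ * B)

theorem PosSemidef.trace_mul_nonneg_of_isHermitian_of_isIdempotentElem (hρ : ρ.PosSemidef)
    {P : Matrix n n 𝕜} (hP : P.IsHermitian) (hP2 : IsIdempotentElem P) :
    0 ≤ (P * ρ).trace :=
  hP.trace_mul_mul_conjTranspose_of_isIdempotentElem hP2 ρ ▸
    (hρ.mul_mul_conjTranspose_same P).trace_nonneg

variable {σ P : Matrix n n 𝕜}

theorem PosSemidef.isHermitian_truncation_sub (hρ : ρ.PosSemidef) (hσ : σ.IsHermitian)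
    (hP : P.IsHermitian) (hP2 : IsIdempotentElem P) :
    (P * ρ * P + (1 - (P * ρ).trace) • σ - ρ).IsHermitian := by
  have hPρP : (P * ρ * P).IsHermitian := by
    simpa only [hP.eq] using isHermitian_mul_mul_conjTranspose P hρ.isHermitian
  have hc : IsSelfAdjoint (1 - (P * ρ).trace) :=
    .sub (.one _) (.of_nonneg (hρ.trace_mul_nonneg_of_isHermitian_of_isIdempotentElem hP hP2))
  exact (hPρP.add (hσ.smul hc)).sub hρ.isHermitian

variable [DecidableEq n]

theorem PosSemidef.norm_trace_unitary_mul_truncation_sub_le (hρ : ρ.PosSemidef)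
    (hρtr : ρ.trace = 1) (hσ : σ.PosSemidef) (hσtr : σ.trace = 1) (hP : P.IsHermitian)
    (hP2 : IsIdempotentElem P) {C : Matrix n n 𝕜} (hC : C ∈ unitary (Matrix n n 𝕜)) :
    ‖(C * (P * ρ * P + (1 - (P * ρ).trace) • σ - ρ)).trace‖ ≤
      (1 - RCLike.re (P * ρ).trace) + 2 * √(1 - RCLike.re (P * ρ).trace) := by
  set Q := 1 - P
  have hQ : Q.IsHermitian := isHermitian_one.sub hP
  have hQ2 : IsIdempotentElem Q := hP2.one_sub
  set s := 1 - RCLike.re (P * ρ).trace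
  have hQρ := hρ.trace_mul_nonneg_of_isHermitian_of_isIdempotentElem hQ hQ2
  have hQρ_eq : (Q * ρ).trace = 1 - (P * ρ).trace := by
    rw [sub_mul, Matrix.one_mul, trace_sub, hρtr]
  have hQre : RCLike.re (Q * ρ).trace = s := by
    rw [hQρ_eq, map_sub, RCLike.one_re]
  have hc : 1 - (P * ρ).trace = (s : 𝕜) := by
    rw [← hQρ_eq, ← hQre, RCLike.conj_eq_iff_re.mp (IsSelfAdjoint.of_nonneg hQρ).star_eq]
  have hs0 : 0 ≤ s := hQre ▸ (RCLike.nonneg_iff.mp hQρ).1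
  -- each term in the shape `A * ρ * Bᴴ` of `norm_trace_unitary_mul_le`
  have hdecomp : P * ρ * P + (1 - (P * ρ).trace) • σ - ρ =
      (s : 𝕜) • (1 * σ * 1ᴴ) - Q * ρ * 1ᴴ - P * ρ * Qᴴ := by
    rw [hQ.eq, conjTranspose_one, hc]; simp only [Q]; noncomm_ring
  have hσC : ‖(C * (1 * σ * 1ᴴ)).trace‖ ≤ 1 := by
    simpa [hσtr] using hσ.norm_trace_unitary_mul_le hC 1 1
  have hQC : ‖(C * (Q * ρ * 1ᴴ)).trace‖ ≤ √s := by
    simpa [hQ.trace_mul_mul_conjTranspose_of_isIdempotentElem hQ2, hQre, hρtr] using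
      hρ.norm_trace_unitary_mul_le hC Q 1
  have hPQC : ‖(C * (P * ρ * Qᴴ)).trace‖ ≤ √s := by
    have := hρ.norm_trace_unitary_mul_le hC P Q
    rw [hP.trace_mul_mul_conjTranspose_of_isIdempotentElem hP2,
      hQ.trace_mul_mul_conjTranspose_of_isIdempotentElem hQ2, hQre] at this
    refine this.trans (mul_le_of_le_one_left (Real.sqrt_nonneg s) (Real.sqrt_le_one.mpr ?_))
    linarith
  calc ‖(C * (P * ρ * P + (1 - (P * ρ).trace) • σ - ρ)).trace‖
      = ‖(s : 𝕜) * (C * (1 * σ * 1ᴴ)).trace - (C * (Q * ρ * 1ᴴ)).trace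
          - (C * (P * ρ * Qᴴ)).trace‖ := by
        rw [hdecomp, Matrix.mul_sub, Matrix.mul_sub, Matrix.mul_smul, trace_sub, trace_sub,
          trace_smul, smul_eq_mul]
    _ ≤ s * 1 + √s + √s := by
        refine (norm_sub_le_of_le (norm_sub_le_of_le ?_ hQC) hPQC)
        rw [norm_mul, RCLike.norm_ofReal, abs_of_nonneg hs0]
        exact mul_le_mul_of_nonneg_left hσC hs0
    _ = s + 2 * √s := by ring

theorem IsHermitian.exists_mem_unitary_mul_eq_cfcAbs {D : Matrix n n 𝕜} (hD : D.IsHermitian) :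
    ∃ C ∈ unitary (Matrix n n 𝕜), C * D = CFC.abs D := by
  set sgn : ℝ → ℝ := fun x => if x < 0 then -1 else 1
  have hsgn : ContinuousOn sgn (spectrum ℝ D) := D.finite_real_spectrum.continuousOn sgn
  refine ⟨cfc sgn D, ?_, ?_⟩
  · have hsq : cfc sgn D * cfc sgn D = 1 := by
      rw [← cfc_mul sgn sgn D, ← cfc_one ℝ D]
      exact cfc_congr fun x _ => by simp only [sgn]; split_ifs <;> norm_num
    rw [Unitary.mem_iff, (cfc_predicate sgn D).star_eq]
    exact ⟨hsq, hsq⟩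
  · rw [CFC.abs_eq_cfc_norm D hD.isSelfAdjoint]
    nth_rewrite 2 [← cfc_id ℝ D]
    rw [← cfc_mul sgn id D]
    refine cfc_congr fun x _ => ?_
    simp only [sgn, id, Real.norm_eq_abs]
    split_ifs with hx
    · rw [abs_of_neg hx]; ring
    · rw [abs_of_nonneg (not_lt.mp hx)]; ring

end Matrix

theorem traceNorm_eq_re_trace_cfcAbs {d : ℕ} (A : Matrix (Fin d) (Fin d) ℂ) :
    traceNorm A = (CFC.abs A).trace.re := by
  have hA := (posSemidef_conjTranspose_mul_self A).1
  rw [CFC.abs, CFC.sqrt_eq_real_sqrt _ (star_mul_self_nonneg A), cfcₙ_eq_cfc,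
    star_eq_conjTranspose, hA.cfc_eq, IsHermitian.cfc, Unitary.conjStarAlgAut_apply]
  -- `traceNorm` is this spectral formula for `cfc Real.sqrt (Aᴴ * A)`, written out
  rfl

theorem two_mul_sqrt_two_rpow_neg_add_le {x : ℝ} (hx : 0 ≤ x) :
    2 * √((2 : ℝ) ^ (-x)) + (2 : ℝ) ^ (-x) ≤ (2 : ℝ) ^ (2 - x / 2) := by
  set y := (2 : ℝ) ^ (-x / 2)
  have hy0 : 0 ≤ y := by positivity
  have hy1 : y ≤ 1 := Real.rpow_le_one_of_one_le_of_nonpos one_le_two (by linarith)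
  have hsq : (2 : ℝ) ^ (-x) = y ^ 2 := by
    rw [← Real.rpow_natCast, ← Real.rpow_mul zero_le_two]; norm_num
  have hrhs : (2 : ℝ) ^ (2 - x / 2) = 4 * y := by
    rw [sub_eq_add_neg, Real.rpow_add two_pos, ← neg_div]; norm_num [y]
  rw [hsq, hrhs, Real.sqrt_sq hy0]
  nlinarith

theorem truncation_channel_bound_general {d : ℕ} (ρ P : Matrix (Fin d) (Fin d) ℂ)
    (v : Fin d → ℂ)
    (hρ : ρ.PosSemidef) (hρtr : ρ.trace = 1)
    (hP : P.IsHermitian) (hP2 : P * P = P)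
    (hv : ∑ i, ‖v i‖ ^ 2 = 1)
    (ε : ℝ) (h : 1 - ε ≤ (Matrix.trace (P * ρ)).re) :
    traceNorm (P * ρ * P + (1 - Matrix.trace (P * ρ)) • Matrix.vecMulVec v (star v) - ρ)
      ≤ 2 * Real.sqrt ε + ε ∧
    ∀ L : ℕ, ε = (2 : ℝ) ^ (-(L : ℝ)) →
      2 * Real.sqrt ε + ε ≤ (2 : ℝ) ^ (2 - (L : ℝ) / 2) := by
  refine ⟨?_, fun L hL => hL ▸ two_mul_sqrt_two_rpow_neg_add_le L.cast_nonneg⟩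
  have hσ := posSemidef_vecMulVec_self_star v
  have hσtr : (vecMulVec v (star v)).trace = 1 := by
    simp [trace, vecMulVec_apply, RCLike.mul_conj, ← Complex.ofReal_pow, ← Complex.ofReal_sum, hv]
  obtain ⟨C, hC, hCD⟩ :=
    (hρ.isHermitian_truncation_sub hσ.isHermitian hP hP2).exists_mem_unitary_mul_eq_cfcAbs
  have hs : √(1 - (P * ρ).trace.re) ≤ √ε := Real.sqrt_le_sqrt (by linarith)
  calc traceNorm _ = (C * _).trace.re := by rw [traceNorm_eq_re_trace_cfcAbs, hCD]
    _ ≤ ‖(C * _).trace‖ := Complex.re_le_norm _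
    _ ≤ (1 - (P * ρ).trace.re) + 2 * √(1 - (P * ρ).trace.re) :=
      hρ.norm_trace_unitary_mul_truncation_sub_le hρtr hσ hσtr hP hP2 hC
    _ ≤ 2 * √ε + ε := by linarith

/-- Trace-norm bound for the truncation channel `𝒯(ρ) = PρP + (1 - tr(Pρ)) v vᴴ`:
if `ρ` is a density matrix, `P` a Hermitian projection, `v` a unit vector, `ε ∈ [0,1]` and
`tr(Pρ) ≥ 1 - ε`, then `‖𝒯(ρ) - ρ‖₁ ≤ 2√ε + ε`; in particular, for `ε = 2^{-L}` the bound
is at most `2^{2 - L/2}`. -/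
theorem truncation_channel_bound {d : ℕ} (ρ P : Matrix (Fin d) (Fin d) ℂ)
    (v : Fin d → ℂ)
    (hρ : ρ.PosSemidef) (hρtr : ρ.trace = 1)
    (hP : P.IsHermitian) (hP2 : P * P = P)
    (hv : ∑ i, ‖v i‖ ^ 2 = 1)
    (ε : ℝ) (hε0 : 0 ≤ ε) (hε1 : ε ≤ 1) (h : 1 - ε ≤ (Matrix.trace (P * ρ)).re) :
    traceNorm (P * ρ * P + (1 - Matrix.trace (P * ρ)) • Matrix.vecMulVec v (star v) - ρ)
      ≤ 2 * Real.sqrt ε + ε ∧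
    ∀ L : ℕ, ε = (2 : ℝ) ^ (-(L : ℝ)) →
      2 * Real.sqrt ε + ε ≤ (2 : ℝ) ^ (2 - (L : ℝ) / 2) :=
  truncation_channel_bound_general ρ P v hρ hρtr hP hP2 hv ε h
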